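/- Let c > 0, i ≥ 1, and let I_1, ..., I_i > 0, S_1, ..., S_{i-1} < 0, L_1, ..., L_{i-1} > 0, L̄ > 0 be real numbers with Σ_{j=1}^{i} I_j < c, and set I = Σ_{j=1}^{i-1} I_j and K = -Σ_{j=1}^{i-1} L_j S_j / c + (L̄/c) I_i + (L̄/c) I. Let v_0, v_n, α, Δt be real numbers with α ≥ 0, and suppose: (a) v_n - v_0 = I_i Δt - c α; (b) v_0 - K ≤ c α - (c - I) Δt; (c) v_0 ≤ (L̄/c) I_i. Then v_n ≤ (I_i / (c (c - I))) (c L̄ - Σ_{j=1}^{i-1} S_j L_j). -/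

import Mathlib

/-!
Over the busy period, the elapsed time `Δt` is bounded through (b) by `c α - v₀ + K` divided by
`c - I`, the rate left over by the higher-priority classes; substituting this into (a) gives
`(c - I) vₙ ≤ (c - I - I_i) (v₀ - c α) + I_i K`. The coefficient `c - I - I_i` is nonnegative, so
the right side is largest for `α = 0` and `v₀ = L̄ I_i / c`, and there it simplifies to
`I_i (c L̄ - Σ S_j L_j) / c`.
-/

open Finset

theorem sum_Icc_one_eq_sum_Icc_pred_add {M : Type*} [AddCommMonoid M] (f : ℕ → M) {i : ℕ}
    (hi : 1 ≤ i) : ∑ j ∈ Icc 1 i, f j = ∑ j ∈ Icc 1 (i - 1), f j + f i := by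
  obtain ⟨k, rfl⟩ := Nat.exists_eq_add_of_le' hi
  exact sum_Icc_succ_top (by omega) f

theorem mul_sub_le_of_credit_variation {c Isum Ii K v₀ vₙ α Δt : ℝ} (hIi : 0 ≤ Ii)
    (ha : vₙ - v₀ = Ii * Δt - c * α) (hb : v₀ - K ≤ c * α - (c - Isum) * Δt) :
    vₙ * (c - Isum) ≤ (c - Isum - Ii) * (v₀ - c * α) + Ii * K := by
  linear_combination (c - Isum) * ha + Ii * hb

theorem credit_le_of_credit_variation {c Isum Ii Lbar T K v₀ vₙ α Δt : ℝ} (hc : 0 < c)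
    (hIi : 0 ≤ Ii) (hgap : Isum + Ii < c) (hK : c * K = Lbar * (Ii + Isum) - T) (hα : 0 ≤ α)
    (ha : vₙ - v₀ = Ii * Δt - c * α) (hb : v₀ - K ≤ c * α - (c - Isum) * Δt)
    (hcv : c * v₀ ≤ Lbar * Ii) :
    vₙ ≤ Ii / (c * (c - Isum)) * (c * Lbar - T) := by
  have hvₙ := mul_sub_le_of_credit_variation hIi ha hb
  have hv₀ : c * (v₀ - c * α) ≤ Lbar * Ii := by nlinarith [mul_nonneg (mul_nonneg hc.le hc.le) hα]
  have hscaled : c * (vₙ * (c - Isum)) ≤ Ii * (c * Lbar - T) := by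
    nlinarith [mul_le_mul_of_nonneg_left hv₀ (by linarith : 0 ≤ c - Isum - Ii)]
  rw [div_mul_eq_mul_div, le_div_iff₀ (mul_pos hc (by linarith))]
  linarith

theorem final_deduction_general
    (c : ℝ) (hc : 0 < c) (i : ℕ) (hi : 1 ≤ i)
    (I S L : ℕ → ℝ) (Lbar : ℝ)
    (hI : ∀ j ∈ Icc 1 i, 0 < I j)
    (hsum : ∑ j ∈ Icc 1 i, I j < c)
    (Isum K : ℝ)
    (hIsum : Isum = ∑ j ∈ Icc 1 (i - 1), I j)
    (hK : K = -(∑ j ∈ Icc 1 (i - 1), L j * S j / c) + (Lbar / c) * I i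
            + (Lbar / c) * Isum)
    (v₀ vₙ α Δt : ℝ) (hα : 0 ≤ α)
    (ha : vₙ - v₀ = I i * Δt - c * α)
    (hb : v₀ - K ≤ c * α - (c - Isum) * Δt)
    (hcv : v₀ ≤ (Lbar / c) * I i) :
    vₙ ≤ (I i / (c * (c - Isum))) * (c * Lbar - ∑ j ∈ Icc 1 (i - 1), S j * L j) := by
  have hIi : 0 < I i := hI i (mem_Icc.2 ⟨hi, le_rfl⟩)
  have hgap : Isum + I i < c := by
    rwa [hIsum, ← sum_Icc_one_eq_sum_Icc_pred_add I hi]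
  have hcK : c * K = Lbar * (I i + Isum) - ∑ j ∈ Icc 1 (i - 1), S j * L j := by
    simp only [hK, ← sum_div, mul_comm (L _)]
    field_simp
    ring
  have hcv' : c * v₀ ≤ Lbar * I i := by
    rw [div_mul_eq_mul_div, le_div_iff₀ hc] at hcv
    linarith
  exact credit_le_of_credit_variation hc hIi.le hgap hcK hα ha hb hcv'

/-- the final algebraic deduction in the proof of Theorem 1,
yielding the improved credit bound `V_i^max`. -/
theorem final_deduction
    (c : ℝ) (hc : 0 < c) (i : ℕ) (hi : 1 ≤ i)
    (I S L : ℕ → ℝ) (Lbar : ℝ)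
    (hI : ∀ j ∈ Icc 1 i, 0 < I j)
    (hS : ∀ j ∈ Icc 1 (i - 1), S j < 0)
    (hL : ∀ j ∈ Icc 1 (i - 1), 0 < L j)
    (hLbar : 0 < Lbar)
    (hsum : ∑ j ∈ Icc 1 i, I j < c)
    (Isum K : ℝ)
    (hIsum : Isum = ∑ j ∈ Icc 1 (i - 1), I j)
    (hK : K = -(∑ j ∈ Icc 1 (i - 1), L j * S j / c) + (Lbar / c) * I i
            + (Lbar / c) * Isum)
    (v₀ vₙ α Δt : ℝ) (hα : 0 ≤ α)
    (ha : vₙ - v₀ = I i * Δt - c * α)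
    (hb : v₀ - K ≤ c * α - (c - Isum) * Δt)
    (hcv : v₀ ≤ (Lbar / c) * I i) :
    vₙ ≤ (I i / (c * (c - Isum))) * (c * Lbar - ∑ j ∈ Icc 1 (i - 1), S j * L j) :=
  final_deduction_general c hc i hi I S L Lbar hI hsum Isum K hIsum hK v₀ vₙ α Δt hα ha hb hcv
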